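/- Let P ∈ P_m(ℂ^{n×n}) be a regular T-even matrix polynomial of degree m ≥ 1, let λ ∈ ℂ and x ∈ ℂⁿ with x^H x = 1, and let Σ := diag((−1)^{m−1}, (−1)^{m−2}, …, (−1)^0) ∈ ℝ^{m×m}. Let S_e denote the T-even pencils of size mn (L(z) = zX + Y with Xᵀ = −X, Yᵀ = Y) and S_o the T-odd pencils of size mn (Xᵀ = X, Yᵀ = −Y). Then for M ∈ {F, 2}: (1) if |λ| ≤ 1 and L_e ∈ S_e lies in 𝕃₁(P) with right ansatz vector v satisfying Σv = v and ‖v‖₂ = 1, then sqrt((m+1)/(2m)) · η(λ, x, P) ≤ η_M^{S_e}(λ, Λ_{m−1}⊗x, L_e) ≤ √2 · η(λ, x, P); (2) if |λ| ≥ 1 and L_o ∈ S_o lies in 𝕃₁(P) with right ansatz vector v satisfying Σv = −v and ‖v‖₂ = 1, then sqrt((m+1)/(2m)) · η(λ, x, P) ≤ η_M^{S_o}(λ, Λ_{m−1}⊗x, L_o) ≤ √2 · η(λ, x, P). -/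

import Mathlib

open scoped ComplexConjugate
open Matrix

noncomputable section

variable {ι : Type*} [Fintype ι] [DecidableEq ι]

/-- Evaluation of the matrix polynomial with coefficient list `A` at the point `z`. -/
def polyEval {m : ℕ} (A : Fin (m+1) → Matrix ι ι ℂ) (z : ℂ) : Matrix ι ι ℂ :=
  ∑ j : Fin (m+1), z ^ (j : ℕ) • A j

/-- Squared Euclidean norm of a complex vector. -/
def vecNormSq (x : ι → ℂ) : ℝ := ∑ i, ‖x i‖ ^ 2

/-- Euclidean norm of a complex vector. -/
def vecNorm (x : ι → ℂ) : ℝ := Real.sqrt (vecNormSq x)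

/-- `‖(1, z, …, z^m)‖₂²`. -/
def lamNormSq (m : ℕ) (z : ℂ) : ℝ := ∑ j : Fin (m+1), ‖z ^ (j : ℕ)‖ ^ 2

/-- Squared Frobenius norm of a matrix. -/
def frobNormSq (M : Matrix ι ι ℂ) : ℝ := ∑ i, ∑ k, ‖M i k‖ ^ 2

/-- Spectral (operator 2-) norm of a matrix. -/
def specNorm (M : Matrix ι ι ℂ) : ℝ := ‖Matrix.toEuclideanCLM (𝕜 := ℂ) M‖

/-- Frobenius norm of a matrix polynomial: `(Σ_j ‖A_j‖_F²)^{1/2}`. -/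
def polyNormF {m : ℕ} (A : Fin (m+1) → Matrix ι ι ℂ) : ℝ :=
  Real.sqrt (∑ j, frobNormSq (A j))

/-- Spectral norm of a matrix polynomial: `(Σ_j ‖A_j‖₂²)^{1/2}`. -/
def polyNorm2 {m : ℕ} (A : Fin (m+1) → Matrix ι ι ℂ) : ℝ :=
  Real.sqrt (∑ j, specNorm (A j) ^ 2)

/-- Structured backward error of `(lam, x)` as an approximate eigenpair of the matrix
polynomial `A`, with respect to the polynomial norm `N` and the structure class `S`. -/
def eta {m : ℕ} (N : (Fin (m+1) → Matrix ι ι ℂ) → ℝ)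
    (S : Set (Fin (m+1) → Matrix ι ι ℂ)) (lam : ℂ) (x : ι → ℂ)
    (A : Fin (m+1) → Matrix ι ι ℂ) : ℝ :=
  sInf {t | ∃ ΔA ∈ S, (polyEval A lam + polyEval ΔA lam) *ᵥ x = 0 ∧ t = N ΔA}

/-- A matrix polynomial is regular if `det P(z) ≠ 0` for some `z`. -/
def Regular {m : ℕ} (A : Fin (m+1) → Matrix ι ι ℂ) : Prop :=
  ∃ z : ℂ, (polyEval A z).det ≠ 0


/-- The Kronecker product of two vectors. -/
def kronVec {m' n : ℕ} (v : Fin m' → ℂ) (x : Fin n → ℂ) : Fin m' × Fin n → ℂ :=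
  fun p => v p.1 * x p.2

/-- `Λ_{m−1}(z) = (z^{m−1}, …, z, 1)ᵀ`. -/
def lamVec (m : ℕ) (z : ℂ) : Fin m → ℂ := fun i => z ^ (m - 1 - (i : ℕ))

/-- The pencil `L(z) = zX + Y`, encoded by its coefficient list `B` with `B 0 = Y`,
`B 1 = X`, lies in `𝕃₁(P)` with right ansatz vector `v`:
`L(z)·(Λ_{m−1} ⊗ I_n) = v ⊗ P(z)` for all `z` (stated via the action on vectors). -/
def InL1 {n m : ℕ} (A : Fin (m+1) → Matrix (Fin n) (Fin n) ℂ)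
    (B : Fin (1+1) → Matrix (Fin m × Fin n) (Fin m × Fin n) ℂ) (v : Fin m → ℂ) : Prop :=
  ∀ (z : ℂ) (u : Fin n → ℂ),
    polyEval B z *ᵥ kronVec (lamVec m z) u = kronVec v (polyEval A z *ᵥ u)

/-- The class of T-even matrix polynomials (for `m = 1`: T-even pencils `zX + Y` with
`Y` symmetric and `X` skew-symmetric). -/
def TevenPoly {ι : Type*} [Fintype ι] [DecidableEq ι] {m : ℕ} :
    Set (Fin (m+1) → Matrix ι ι ℂ) :=
  {B | ∀ j : Fin (m+1), (Even (j : ℕ) → (B j)ᵀ = B j) ∧ (¬ Even (j : ℕ) → (B j)ᵀ = -(B j))}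

/-- The class of T-odd matrix polynomials (for `m = 1`: T-odd pencils `zX + Y` with
`Y` skew-symmetric and `X` symmetric). -/
def ToddPoly {ι : Type*} [Fintype ι] [DecidableEq ι] {m : ℕ} :
    Set (Fin (m+1) → Matrix ι ι ℂ) :=
  {B | ∀ j : Fin (m+1), (Even (j : ℕ) → (B j)ᵀ = -(B j)) ∧ (¬ Even (j : ℕ) → (B j)ᵀ = B j)}


/-!
The unstructured backward error is `η(λ, x, P) = ‖P(λ)x‖ / ‖Λ_m‖`, attained by a rank-one
perturbation of the coefficients. For `L ∈ 𝕃₁(P)` with `‖v‖ = 1` and `w = Λ_{m-1} ⊗ x`,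
`L(λ)w = v ⊗ P(λ)x` has norm `‖P(λ)x‖`, so every pencil perturbation with `(L + ΔL)(λ)w = 0`
satisfies `‖P(λ)x‖ ≤ √(1 + |λ|²) ‖ΔL‖₂ ‖w‖`; together with
`(m + 1)(1 + |λ|²)‖Λ_{m-1}‖² ≤ 2m ‖Λ_m‖²` this is the lower bound. For the upper bound, split
the residual as `p + β w̄` with `wᵀp = 0`: the symmetric/skew-symmetric rank-two matrices built
from `p w̄ᵀ ± w̄ pᵀ` and `w̄ w̄ᵀ` give a T-even pencil removing it at squared Frobenius cost
`2‖p‖² / ((1 + |λ|²)‖w‖²) + |β|²`, which is at most `2 ‖P(λ)x‖² / ‖Λ_m‖²` when `|λ| ≤ 1`.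
Reversing the pencil exchanges T-even and T-odd and `λ` with `λ⁻¹`, which gives the case
`|λ| ≥ 1`.
-/

section Vectors

variable {n : Type*} [Fintype n]

lemma vecNorm_eq_norm_toLp (x : n → ℂ) : vecNorm x = ‖(WithLp.toLp 2 x : EuclideanSpace ℂ n)‖ := by
  rw [EuclideanSpace.norm_eq]; rfl

lemma vecNormSq_eq_norm_toLp_sq (x : n → ℂ) :
    vecNormSq x = ‖(WithLp.toLp 2 x : EuclideanSpace ℂ n)‖ ^ 2 := by
  rw [EuclideanSpace.norm_sq_eq]; rfl

lemma vecNormSq_nonneg (x : n → ℂ) : 0 ≤ vecNormSq x := by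
  rw [vecNormSq_eq_norm_toLp_sq]; positivity

lemma vecNorm_nonneg (x : n → ℂ) : 0 ≤ vecNorm x := Real.sqrt_nonneg _

lemma sq_vecNorm (x : n → ℂ) : vecNorm x ^ 2 = vecNormSq x :=
  Real.sq_sqrt (vecNormSq_nonneg x)

lemma vecNormSq_smul (c : ℂ) (x : n → ℂ) : vecNormSq (c • x) = ‖c‖ ^ 2 * vecNormSq x := by
  simp only [vecNormSq_eq_norm_toLp_sq, WithLp.toLp_smul, norm_smul, mul_pow]

lemma vecNormSq_neg (x : n → ℂ) : vecNormSq (-x) = vecNormSq x := by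
  simp [vecNormSq]

lemma vecNormSq_star (x : n → ℂ) : vecNormSq (star x) = vecNormSq x := by
  simp [vecNormSq]

lemma star_dotProduct_self (x : n → ℂ) : star x ⬝ᵥ x = (vecNormSq x : ℂ) := by
  simp only [dotProduct, vecNormSq, Pi.star_apply, Complex.star_def, Complex.conj_mul']
  push_cast; rfl

lemma dotProduct_star_self (x : n → ℂ) : x ⬝ᵥ star x = (vecNormSq x : ℂ) := by
  rw [dotProduct_comm, star_dotProduct_self]

lemma vecNormSq_add_of_star_dotProduct_eq_zero {x y : n → ℂ} (h : star x ⬝ᵥ y = 0) :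
    vecNormSq (x + y) = vecNormSq x + vecNormSq y := by
  simp only [vecNormSq_eq_norm_toLp_sq, WithLp.toLp_add, sq]
  apply norm_add_sq_eq_norm_sq_add_norm_sq_of_inner_eq_zero (𝕜 := ℂ)
  rwa [EuclideanSpace.inner_toLp_toLp, dotProduct_comm]

lemma norm_dotProduct_sq_le (x y : n → ℂ) : ‖x ⬝ᵥ y‖ ^ 2 ≤ vecNormSq x * vecNormSq y := by
  have h := norm_inner_le_norm (𝕜 := ℂ) (WithLp.toLp 2 (star x) : EuclideanSpace ℂ n)
    (WithLp.toLp 2 y)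
  rw [EuclideanSpace.inner_toLp_toLp, star_star, dotProduct_comm] at h
  rw [← vecNormSq_star x, vecNormSq_eq_norm_toLp_sq, vecNormSq_eq_norm_toLp_sq, ← mul_pow]
  exact pow_le_pow_left₀ (norm_nonneg _) h 2

lemma vecNormSq_kronVec {k l : ℕ} (v : Fin k → ℂ) (x : Fin l → ℂ) :
    vecNormSq (kronVec v x) = vecNormSq v * vecNormSq x := by
  simp only [vecNormSq, kronVec, norm_mul, mul_pow, Fintype.sum_prod_type,
    ← Finset.mul_sum, ← Finset.sum_mul]

lemma vecNormSq_lamVec (m : ℕ) (z : ℂ) :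
    vecNormSq (lamVec m z) = ∑ j ∈ Finset.range m, (‖z‖ ^ 2) ^ j := by
  rw [vecNormSq, ← Finset.sum_range_reflect, ← Fin.sum_univ_eq_sum_range]
  simp only [lamVec, norm_pow, ← pow_mul, mul_comm]

end Vectors

section Matrices

variable {n : Type*} [Fintype n]

lemma frobNormSq_eq_vecNormSq_uncurry (M : Matrix n n ℂ) :
    frobNormSq M = vecNormSq (Function.uncurry M) := by
  rw [frobNormSq, vecNormSq, Fintype.sum_prod_type]; rfl

lemma frobNormSq_nonneg (M : Matrix n n ℂ) : 0 ≤ frobNormSq M := by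
  rw [frobNormSq_eq_vecNormSq_uncurry]; exact vecNormSq_nonneg _

lemma frobNormSq_smul (c : ℂ) (M : Matrix n n ℂ) :
    frobNormSq (c • M) = ‖c‖ ^ 2 * frobNormSq M := by
  simp only [frobNormSq_eq_vecNormSq_uncurry, ← vecNormSq_smul]; rfl

lemma frobNormSq_vecMulVec (a b : n → ℂ) :
    frobNormSq (vecMulVec a b) = vecNormSq a * vecNormSq b := by
  simp only [frobNormSq, vecNormSq, vecMulVec_apply, norm_mul, mul_pow, Finset.mul_sum,
    Finset.sum_mul]
  exact Finset.sum_comm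

lemma star_uncurry_vecMulVec_dotProduct (a b c d : n → ℂ) :
    star (Function.uncurry (vecMulVec a b)) ⬝ᵥ Function.uncurry (vecMulVec c d)
      = (star a ⬝ᵥ c) * (star b ⬝ᵥ d) := by
  simp only [dotProduct, Fintype.sum_prod_type, Pi.star_apply, Finset.sum_mul_sum]
  refine Finset.sum_congr rfl fun i _ => Finset.sum_congr rfl fun k _ => ?_
  change star (a i * b k) * (c i * d k) = _
  rw [star_mul']; ring

lemma vecMulVec_mulVec_eq_smul (u v w : n → ℂ) : vecMulVec u v *ᵥ w = (v ⬝ᵥ w) • u := by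
  rw [vecMulVec_mulVec, op_smul_eq_smul]

variable [DecidableEq n]

lemma vecNorm_mulVec_le (M : Matrix n n ℂ) (y : n → ℂ) :
    vecNorm (M *ᵥ y) ≤ specNorm M * vecNorm y := by
  simpa only [specNorm, vecNorm_eq_norm_toLp, Matrix.toEuclideanCLM_toLp] using
    (Matrix.toEuclideanCLM (𝕜 := ℂ) M).le_opNorm (WithLp.toLp 2 y)

lemma specNorm_le_sqrt_frobNormSq (M : Matrix n n ℂ) : specNorm M ≤ √(frobNormSq M) := by
  refine ContinuousLinearMap.opNorm_le_bound _ (Real.sqrt_nonneg _) fun y => ?_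
  rw [← Real.sqrt_sq (norm_nonneg _), ← Real.sqrt_sq (norm_nonneg y), ← Real.sqrt_mul
    (frobNormSq_nonneg M)]
  refine Real.sqrt_le_sqrt ?_
  rw [EuclideanSpace.norm_sq_eq, EuclideanSpace.norm_sq_eq, frobNormSq, Finset.sum_mul]
  exact Finset.sum_le_sum fun i _ => norm_dotProduct_sq_le (M i) y.ofLp

end Matrices

section Polynomials

variable {n : Type*} {m : ℕ}

lemma polyEval_smul_const (c : Fin (m + 1) → ℂ) (M : Matrix n n ℂ) (z : ℂ) :
    polyEval (fun j => c j • M) z = ((fun j : Fin (m + 1) => z ^ (j : ℕ)) ⬝ᵥ c) • M := by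
  simp only [polyEval, dotProduct, smul_smul, Finset.sum_smul]

variable [Fintype n]

lemma lamNormSq_eq_geom_sum (m : ℕ) (z : ℂ) :
    lamNormSq m z = ∑ j ∈ Finset.range (m + 1), (‖z‖ ^ 2) ^ j := by
  rw [lamNormSq, ← Fin.sum_univ_eq_sum_range]
  simp only [norm_pow, ← pow_mul, mul_comm]

lemma lamNormSq_pos (m : ℕ) (z : ℂ) : 0 < lamNormSq m z := by
  rw [lamNormSq_eq_geom_sum]; exact geom_sum_pos (sq_nonneg _) m.succ_ne_zero

lemma polyNormF_nonneg (D : Fin (m + 1) → Matrix n n ℂ) : 0 ≤ polyNormF D :=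
  Real.sqrt_nonneg _

lemma polyNormF_smul_const (c : Fin (m + 1) → ℂ) (M : Matrix n n ℂ) :
    polyNormF (fun j => c j • M) = √(vecNormSq c * frobNormSq M) := by
  simp only [polyNormF, frobNormSq_smul, vecNormSq, Finset.sum_mul]

variable [DecidableEq n]

lemma polyNorm2_nonneg (D : Fin (m + 1) → Matrix n n ℂ) : 0 ≤ polyNorm2 D :=
  Real.sqrt_nonneg _

lemma polyNorm2_le_polyNormF (D : Fin (m + 1) → Matrix n n ℂ) : polyNorm2 D ≤ polyNormF D := by
  refine Real.sqrt_le_sqrt (Finset.sum_le_sum fun j _ => ?_)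
  exact (pow_le_pow_left₀ (norm_nonneg _) (specNorm_le_sqrt_frobNormSq (D j)) 2).trans
    (Real.sq_sqrt (frobNormSq_nonneg _)).le

lemma specNorm_polyEval_le (D : Fin (m + 1) → Matrix n n ℂ) (z : ℂ) :
    specNorm (polyEval D z) ≤ √(lamNormSq m z) * polyNorm2 D :=
  calc specNorm (polyEval D z) ≤ ∑ j : Fin (m + 1), ‖z ^ (j : ℕ)‖ * specNorm (D j) := by
        rw [specNorm, polyEval, map_sum]
        refine (norm_sum_le _ _).trans (Finset.sum_le_sum fun j _ => ?_)
        rw [map_smul]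
        exact norm_smul_le (z ^ (j : ℕ)) (Matrix.toEuclideanCLM (𝕜 := ℂ) (D j))
    _ ≤ √(lamNormSq m z) * polyNorm2 D :=
        Real.sum_mul_le_sqrt_mul_sqrt _ (fun j : Fin (m + 1) => ‖z ^ (j : ℕ)‖)
          (fun j => specNorm (D j))

lemma vecNorm_mulVec_le_of_add_mulVec_eq_zero {A D : Fin (m + 1) → Matrix n n ℂ} {z : ℂ}
    {y : n → ℂ} (h : (polyEval A z + polyEval D z) *ᵥ y = 0) :
    vecNorm (polyEval A z *ᵥ y) ≤ √(lamNormSq m z) * polyNorm2 D * vecNorm y := by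
  rw [add_mulVec, add_eq_zero_iff_eq_neg] at h
  rw [h, vecNorm, vecNormSq_neg, ← vecNorm]
  exact (vecNorm_mulVec_le _ _).trans
    (mul_le_mul_of_nonneg_right (specNorm_polyEval_le D z) (Real.sqrt_nonneg _))

end Polynomials

section BackwardError

variable {n : Type*} [Fintype n] {m : ℕ} {lam : ℂ} {x : n → ℂ} {A : Fin (m + 1) → Matrix n n ℂ}

lemma eta_le {N : (Fin (m + 1) → Matrix n n ℂ) → ℝ} {S : Set (Fin (m + 1) → Matrix n n ℂ)}
    (hN : ∀ D, 0 ≤ N D) {D : Fin (m + 1) → Matrix n n ℂ} (hD : D ∈ S)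
    (hDx : (polyEval A lam + polyEval D lam) *ᵥ x = 0) : eta N S lam x A ≤ N D :=
  csInf_le ⟨0, by rintro _ ⟨D', -, -, rfl⟩; exact hN D'⟩ ⟨D, hD, hDx, rfl⟩

lemma le_eta {N : (Fin (m + 1) → Matrix n n ℂ) → ℝ} {S : Set (Fin (m + 1) → Matrix n n ℂ)}
    {a : ℝ} (hS : ∃ D ∈ S, (polyEval A lam + polyEval D lam) *ᵥ x = 0)
    (ha : ∀ D ∈ S, (polyEval A lam + polyEval D lam) *ᵥ x = 0 → a ≤ N D) :
    a ≤ eta N S lam x A := by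
  obtain ⟨D, hD, hDx⟩ := hS
  refine le_csInf ⟨N D, D, hD, hDx, rfl⟩ ?_
  rintro _ ⟨D', hD', hD'x, rfl⟩
  exact ha D' hD' hD'x

/-- The minimizer is the rank-one correction `D j = -(conj z^j / ‖Λ_m‖²) • P(z) x xᴴ`. -/
lemma exists_add_mulVec_eq_zero_polyNormF_eq (A : Fin (m + 1) → Matrix n n ℂ) (z : ℂ)
    (hx : vecNormSq x = 1) :
    ∃ D : Fin (m + 1) → Matrix n n ℂ, (polyEval A z + polyEval D z) *ᵥ x = 0 ∧
      polyNormF D = vecNorm (polyEval A z *ᵥ x) / √(lamNormSq m z) := by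
  set Λ : Fin (m + 1) → ℂ := fun j => z ^ (j : ℕ)
  have hΛ : vecNormSq Λ = lamNormSq m z := rfl
  have hS := lamNormSq_pos m z
  set c : Fin (m + 1) → ℂ := (-(lamNormSq m z : ℂ)⁻¹) • star Λ
  refine ⟨fun j => c j • vecMulVec (polyEval A z *ᵥ x) (star x), ?_, ?_⟩
  · have hc : Λ ⬝ᵥ c = -1 := by
      rw [dotProduct_smul, dotProduct_star_self, hΛ, smul_eq_mul, neg_mul,
        inv_mul_cancel₀ (by exact_mod_cast hS.ne')]
    rw [polyEval_smul_const, hc, add_mulVec, neg_one_smul, neg_mulVec, vecMulVec_mulVec_eq_smul,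
      star_dotProduct_self, hx]
    simp
  · rw [polyNormF_smul_const, vecNormSq_smul, vecNormSq_star, hΛ, frobNormSq_vecMulVec,
      vecNormSq_star, hx, mul_one, ← sq_vecNorm]
    have hcS : ‖-(lamNormSq m z : ℂ)⁻¹‖ ^ 2 * lamNormSq m z = (lamNormSq m z)⁻¹ := by
      rw [norm_neg, norm_inv, Complex.norm_real, Real.norm_of_nonneg hS.le]
      field_simp
    rw [hcS, inv_mul_eq_div, Real.sqrt_div (sq_nonneg _), Real.sqrt_sq (vecNorm_nonneg _)]

variable [DecidableEq n]

lemma eta_bounds {S : Set (Fin (m + 1) → Matrix n n ℂ)} {a b : ℝ}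
    {D₀ : Fin (m + 1) → Matrix n n ℂ} (hD₀ : D₀ ∈ S)
    (hD₀x : (polyEval A lam + polyEval D₀ lam) *ᵥ x = 0) (hb : polyNormF D₀ ≤ b)
    (ha : ∀ D : Fin (m + 1) → Matrix n n ℂ,
      (polyEval A lam + polyEval D lam) *ᵥ x = 0 → a ≤ polyNorm2 D) :
    (a ≤ eta polyNormF S lam x A ∧ eta polyNormF S lam x A ≤ b) ∧
      (a ≤ eta polyNorm2 S lam x A ∧ eta polyNorm2 S lam x A ≤ b) :=
  ⟨⟨le_eta ⟨D₀, hD₀, hD₀x⟩ fun D _ hDx => (ha D hDx).trans (polyNorm2_le_polyNormF D),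
      (eta_le polyNormF_nonneg hD₀ hD₀x).trans hb⟩,
    ⟨le_eta ⟨D₀, hD₀, hD₀x⟩ fun D _ hDx => ha D hDx,
      (eta_le polyNorm2_nonneg hD₀ hD₀x).trans ((polyNorm2_le_polyNormF D₀).trans hb)⟩⟩

lemma eta_univ_eq (A : Fin (m + 1) → Matrix n n ℂ) (lam : ℂ) (hx : vecNormSq x = 1) :
    eta polyNormF Set.univ lam x A = vecNorm (polyEval A lam *ᵥ x) / √(lamNormSq m lam) ∧
      eta polyNorm2 Set.univ lam x A = vecNorm (polyEval A lam *ᵥ x) / √(lamNormSq m lam) := by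
  obtain ⟨D₀, hD₀x, hD₀⟩ := exists_add_mulVec_eq_zero_polyNormF_eq A lam hx
  have ha : ∀ D : Fin (m + 1) → Matrix n n ℂ, (polyEval A lam + polyEval D lam) *ᵥ x = 0 →
      vecNorm (polyEval A lam *ᵥ x) / √(lamNormSq m lam) ≤ polyNorm2 D := by
    intro D hDx
    have h := vecNorm_mulVec_le_of_add_mulVec_eq_zero hDx
    rw [show vecNorm x = 1 by rw [vecNorm, hx, Real.sqrt_one], mul_one] at h
    rwa [div_le_iff₀' (Real.sqrt_pos.2 (lamNormSq_pos m lam))]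
  obtain ⟨⟨hF₁, hF₂⟩, h2₁, h2₂⟩ := eta_bounds (Set.mem_univ D₀) hD₀x hD₀.le ha
  exact ⟨le_antisymm hF₂ hF₁, le_antisymm h2₂ h2₁⟩

end BackwardError

section GeomSum

open Finset

variable {t : ℝ} {m : ℕ}

lemma one_le_geom_sum (ht : 0 ≤ t) (hm : 1 ≤ m) : 1 ≤ ∑ j ∈ range m, t ^ j := by
  obtain ⟨k, rfl⟩ := Nat.exists_eq_add_of_le' hm
  rw [geom_sum_succ]
  linarith [mul_nonneg ht (sum_nonneg fun j (_ : j ∈ range k) => pow_nonneg ht j)]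

/-- Pairing `t^j` with `t^(m-j)`: `t^j + t^(m-j) ≤ 1 + t^m` since `(1 - t^j)(1 - t^(m-j)) ≥ 0`. -/
lemma two_mul_geom_sum_le (ht : 0 ≤ t) (m : ℕ) :
    2 * ∑ j ∈ range (m + 1), t ^ j ≤ (m + 1) * (1 + t ^ m) := by
  have hpair : ∀ j ∈ range (m + 1), t ^ j + t ^ (m - j) ≤ 1 + t ^ m := by
    intro j hj
    have hprod : t ^ j * t ^ (m - j) = t ^ m := by
      rw [← pow_add, Nat.add_sub_cancel' (Nat.lt_succ_iff.mp (mem_range.mp hj))]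
    rcases le_total t 1 with h | h
    · nlinarith [pow_le_one₀ ht h (n := j), pow_le_one₀ ht h (n := m - j)]
    · nlinarith [one_le_pow₀ h (n := j), one_le_pow₀ h (n := m - j)]
  calc 2 * ∑ j ∈ range (m + 1), t ^ j
      = ∑ j ∈ range (m + 1), (t ^ j + t ^ (m - j)) := by
        rw [sum_add_distrib, ← sum_range_reflect (fun j => t ^ j) (m + 1)]
        simp only [Nat.add_sub_cancel]; ring
    _ ≤ ∑ _j ∈ range (m + 1), (1 + t ^ m) := sum_le_sum hpair
    _ = (m + 1) * (1 + t ^ m) := by rw [sum_const, card_range, nsmul_eq_mul]; push_cast; ring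

lemma succ_mul_one_add_mul_geom_sum_le (ht : 0 ≤ t) (m : ℕ) :
    (m + 1) * ((1 + t) * ∑ j ∈ range m, t ^ j) ≤ 2 * m * ∑ j ∈ range (m + 1), t ^ j := by
  linear_combination two_mul_geom_sum_le ht m
    - ((m : ℝ) + 1) * ((geom_sum_succ (x := t) (n := m)) + geom_sum_succ' (x := t) (n := m))

lemma geom_sum_succ_le_one_add_mul (ht : 0 ≤ t) (hm : 1 ≤ m) :
    ∑ j ∈ range (m + 1), t ^ j ≤ (1 + t) * ∑ j ∈ range m, t ^ j := by
  linarith [geom_sum_succ (x := t) (n := m), geom_sum_succ' (x := t) (n := m),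
    one_le_geom_sum ht hm]

lemma geom_sum_succ_le_two_mul (ht : 0 ≤ t) (ht₁ : t ≤ 1) (hm : 1 ≤ m) :
    ∑ j ∈ range (m + 1), t ^ j ≤ 2 * ∑ j ∈ range m, t ^ j := by
  linarith [geom_sum_succ' (x := t) (n := m), pow_le_one₀ ht ht₁ (n := m),
    one_le_geom_sum ht hm]

lemma geom_sum_succ_le_two_mul_mul (ht : 1 ≤ t) (hm : 1 ≤ m) :
    ∑ j ∈ range (m + 1), t ^ j ≤ 2 * t * ∑ j ∈ range m, t ^ j := by
  have hG := one_le_geom_sum (zero_le_one.trans ht) hm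
  nlinarith [geom_sum_succ (x := t) (n := m)]

end GeomSum

section LamVec

variable {m : ℕ}

lemma lamNormSq_one (z : ℂ) : lamNormSq 1 z = 1 + ‖z‖ ^ 2 := by
  simp [lamNormSq_eq_geom_sum, add_comm]

lemma one_le_vecNormSq_lamVec (hm : 1 ≤ m) (z : ℂ) : 1 ≤ vecNormSq (lamVec m z) := by
  rw [vecNormSq_lamVec]; exact one_le_geom_sum (sq_nonneg _) hm

lemma succ_mul_one_add_mul_vecNormSq_lamVec_le (z : ℂ) :
    (m + 1) * ((1 + ‖z‖ ^ 2) * vecNormSq (lamVec m z)) ≤ 2 * m * lamNormSq m z := by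
  rw [vecNormSq_lamVec, lamNormSq_eq_geom_sum]
  exact succ_mul_one_add_mul_geom_sum_le (sq_nonneg _) m

lemma two_div_le_two_div_lamNormSq (hm : 1 ≤ m) (z : ℂ) :
    2 / ((1 + ‖z‖ ^ 2) * vecNormSq (lamVec m z)) ≤ 2 / lamNormSq m z := by
  refine div_le_div_of_nonneg_left zero_le_two (lamNormSq_pos m z) ?_
  rw [vecNormSq_lamVec, lamNormSq_eq_geom_sum]
  exact geom_sum_succ_le_one_add_mul (sq_nonneg _) hm

lemma max_div_le_two_div_lamNormSq_of_norm_le_one (hm : 1 ≤ m) {z : ℂ} (hz : ‖z‖ ≤ 1) :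
    max (2 / ((1 + ‖z‖ ^ 2) * vecNormSq (lamVec m z))) (1 / vecNormSq (lamVec m z))
      ≤ 2 / lamNormSq m z := by
  refine max_le (two_div_le_two_div_lamNormSq hm z) ?_
  rw [div_le_div_iff₀ (one_pos.trans_le (one_le_vecNormSq_lamVec hm z)) (lamNormSq_pos m z),
    vecNormSq_lamVec, lamNormSq_eq_geom_sum]
  linarith [geom_sum_succ_le_two_mul (sq_nonneg _) (pow_le_one₀ (norm_nonneg z) hz) hm]

lemma max_div_le_two_div_lamNormSq_of_one_le_norm (hm : 1 ≤ m) {z : ℂ} (hz : 1 ≤ ‖z‖) :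
    max (2 / ((1 + ‖z‖ ^ 2) * vecNormSq (lamVec m z))) (1 / (‖z‖ ^ 2 * vecNormSq (lamVec m z)))
      ≤ 2 / lamNormSq m z := by
  have ht : 1 ≤ ‖z‖ ^ 2 := one_le_pow₀ hz
  refine max_le (two_div_le_two_div_lamNormSq hm z) ?_
  rw [div_le_div_iff₀ (mul_pos (one_pos.trans_le ht) (one_pos.trans_le
    (one_le_vecNormSq_lamVec hm z))) (lamNormSq_pos m z), vecNormSq_lamVec, lamNormSq_eq_geom_sum]
  linarith [geom_sum_succ_le_two_mul_mul ht hm]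

end LamVec

section StructuredPencil

variable {n : Type*}

def rankTwo (a w : n → ℂ) (ε γ : ℂ) : Matrix n n ℂ :=
  vecMulVec a (star w) + ε • vecMulVec (star w) a + γ • vecMulVec (star w) (star w)

lemma transpose_rankTwo_one (a w : n → ℂ) (γ : ℂ) : (rankTwo a w 1 γ)ᵀ = rankTwo a w 1 γ := by
  simp only [rankTwo, transpose_add, transpose_smul, transpose_vecMulVec, one_smul]
  abel

lemma transpose_rankTwo_neg_one (a w : n → ℂ) :
    (rankTwo a w (-1) 0)ᵀ = -rankTwo a w (-1) 0 := by
  simp only [rankTwo, transpose_add, transpose_vecMulVec, zero_smul, add_zero, neg_one_smul,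
    transpose_neg]
  abel

lemma polyEval_pencil (B : Fin (1 + 1) → Matrix n n ℂ) (z : ℂ) : polyEval B z = B 0 + z • B 1 := by
  simp [polyEval, Fin.sum_univ_two]

lemma polyEval_pencil_comp_rev (B : Fin (1 + 1) → Matrix n n ℂ) {z : ℂ} (hz : z ≠ 0) :
    polyEval (B ∘ Fin.rev) z = z • polyEval B z⁻¹ := by
  simp only [polyEval_pencil, Function.comp_apply, smul_add, smul_smul, mul_inv_cancel₀ hz,
    one_smul]
  exact add_comm _ _

variable [Fintype n]

lemma vecNormSq_pos {x : n → ℂ} (hx : x ≠ 0) : 0 < vecNormSq x := by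
  rw [vecNormSq_eq_norm_toLp_sq]
  exact pow_pos (norm_pos_iff.mpr ((WithLp.toLp_eq_zero 2).not.mpr hx)) 2

lemma exists_eq_add_smul_star {w : n → ℂ} (hw : w ≠ 0) (u : n → ℂ) :
    ∃ (p : n → ℂ) (β : ℂ), w ⬝ᵥ p = 0 ∧ u = p + β • star w := by
  have hs : (vecNormSq w : ℂ) ≠ 0 := by exact_mod_cast (vecNormSq_pos hw).ne'
  refine ⟨u - ((w ⬝ᵥ u) / vecNormSq w) • star w, (w ⬝ᵥ u) / vecNormSq w, ?_, by abel⟩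
  rw [dotProduct_sub, dotProduct_smul, dotProduct_star_self, smul_eq_mul, div_mul_cancel₀ _ hs,
    sub_self]

lemma vecNormSq_add_smul_star {w p : n → ℂ} (hwp : w ⬝ᵥ p = 0) (β : ℂ) :
    vecNormSq (p + β • star w) = vecNormSq p + ‖β‖ ^ 2 * vecNormSq w := by
  rw [vecNormSq_add_of_star_dotProduct_eq_zero, vecNormSq_smul, vecNormSq_star]
  rw [dotProduct_smul, star_dotProduct_star, hwp, star_zero, smul_zero]

lemma rankTwo_mulVec {a w : n → ℂ} (hwa : w ⬝ᵥ a = 0) (ε γ : ℂ) :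
    rankTwo a w ε γ *ᵥ w = (vecNormSq w : ℂ) • a + (γ * vecNormSq w) • star w := by
  simp only [rankTwo, add_mulVec, smul_mulVec, vecMulVec_mulVec_eq_smul, star_dotProduct_self,
    dotProduct_comm a w, hwa, zero_smul, smul_zero, add_zero, smul_smul]

/-- The three rank-one pieces of `rankTwo a w ε γ` are Frobenius-orthogonal because `wᵀ a = 0`. -/
lemma frobNormSq_rankTwo {a w : n → ℂ} (hwa : w ⬝ᵥ a = 0) {ε : ℂ} (hε : ‖ε‖ = 1) (γ : ℂ) :
    frobNormSq (rankTwo a w ε γ)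
      = 2 * vecNormSq a * vecNormSq w + ‖γ‖ ^ 2 * vecNormSq w ^ 2 := by
  have haw : star a ⬝ᵥ star w = 0 := by rw [star_dotProduct_star, hwa, star_zero]
  have hwa' : star (star w) ⬝ᵥ a = 0 := by rw [star_star, hwa]
  have hXY : star (Function.uncurry (vecMulVec a (star w)))
      ⬝ᵥ ε • Function.uncurry (vecMulVec (star w) a) = 0 := by
    rw [dotProduct_smul, star_uncurry_vecMulVec_dotProduct, hwa', mul_zero, smul_zero]
  have hXYZ : star (Function.uncurry (vecMulVec a (star w)) + ε • Function.uncurry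
      (vecMulVec (star w) a)) ⬝ᵥ γ • Function.uncurry (vecMulVec (star w) (star w)) = 0 := by
    rw [star_add, add_dotProduct, star_smul, smul_dotProduct, dotProduct_smul, dotProduct_smul,
      star_uncurry_vecMulVec_dotProduct, star_uncurry_vecMulVec_dotProduct, haw]
    simp
  rw [frobNormSq_eq_vecNormSq_uncurry]
  change vecNormSq (Function.uncurry (vecMulVec a (star w)) + ε • Function.uncurry
      (vecMulVec (star w) a) + γ • Function.uncurry (vecMulVec (star w) (star w))) = _
  rw [vecNormSq_add_of_star_dotProduct_eq_zero hXYZ, vecNormSq_add_of_star_dotProduct_eq_zero hXY,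
    vecNormSq_smul, vecNormSq_smul, ← frobNormSq_eq_vecNormSq_uncurry,
    ← frobNormSq_eq_vecNormSq_uncurry, ← frobNormSq_eq_vecNormSq_uncurry, frobNormSq_vecMulVec,
    frobNormSq_vecMulVec, frobNormSq_vecMulVec, vecNormSq_star, hε]
  ring

lemma polyNormF_sq {m : ℕ} (D : Fin (m + 1) → Matrix n n ℂ) :
    polyNormF D ^ 2 = ∑ j, frobNormSq (D j) :=
  Real.sq_sqrt (Finset.sum_nonneg fun j _ => frobNormSq_nonneg (D j))

lemma polyNormF_comp_rev {m : ℕ} (D : Fin (m + 1) → Matrix n n ℂ) :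
    polyNormF (D ∘ Fin.rev) = polyNormF D := by
  simp only [polyNormF, Function.comp_apply]
  rw [← Equiv.sum_comp Fin.revPerm]
  simp only [Fin.revPerm_apply, Fin.rev_rev]

variable [DecidableEq n]

lemma comp_rev_mem_ToddPoly {B : Fin (1 + 1) → Matrix n n ℂ} (hB : B ∈ TevenPoly) :
    B ∘ Fin.rev ∈ ToddPoly := by
  refine Fin.forall_fin_two.mpr ⟨⟨fun _ => (hB 1).2 (by simp), by simp⟩,
    ⟨by simp, fun _ => (hB 0).1 (by simp)⟩⟩

/-- With `u = p + β w̄`, `wᵀ p = 0`, the perturbation is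
`D = [a w̄ᵀ + w̄ aᵀ + (β/‖w‖²) w̄ w̄ᵀ, λ̄ (a w̄ᵀ - w̄ aᵀ)]` where `a = p / ((1 + |λ|²)‖w‖²)`. -/
theorem exists_mem_TevenPoly_polyEval_mulVec_eq (lam : ℂ) {w : n → ℂ} (hw : w ≠ 0)
    (u : n → ℂ) :
    ∃ D ∈ (TevenPoly : Set (Fin (1 + 1) → Matrix n n ℂ)), polyEval D lam *ᵥ w = u ∧
      polyNormF D ^ 2
        ≤ max (2 / ((1 + ‖lam‖ ^ 2) * vecNormSq w)) (1 / vecNormSq w) * vecNormSq u := by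
  obtain ⟨p, β, hwp, rfl⟩ := exists_eq_add_smul_star hw u
  have hs := vecNormSq_pos hw
  set s := vecNormSq w with hs_def
  set t := ‖lam‖ ^ 2 with ht_def
  have ht : 0 < 1 + t := by positivity
  have hts : 0 < (1 + t) * s := by positivity
  set a : n → ℂ := (((1 + t) * s : ℝ) : ℂ)⁻¹ • p
  have hwa : w ⬝ᵥ a = 0 := by rw [dotProduct_smul, hwp, smul_zero]
  refine ⟨![rankTwo a w 1 (β / s), conj lam • rankTwo a w (-1) 0], ?_, ?_, ?_⟩
  · refine Fin.forall_fin_two.mpr ⟨⟨fun _ => transpose_rankTwo_one a w _, by simp⟩,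
      ⟨by simp, fun _ => ?_⟩⟩
    simp only [Matrix.cons_val_one, Matrix.cons_val_zero, transpose_smul,
      transpose_rankTwo_neg_one, smul_neg]
  · have hlam : lam * conj lam = (t : ℂ) := by rw [Complex.mul_conj', ← Complex.ofReal_pow]
    have hs' : (s : ℂ) ≠ 0 := by exact_mod_cast hs.ne'
    have hts' : (((1 + t) * s : ℝ) : ℂ) ≠ 0 := by exact_mod_cast hts.ne'
    simp only [polyEval_pencil, Matrix.cons_val_zero, Matrix.cons_val_one, smul_smul, add_mulVec,
      smul_mulVec, rankTwo_mulVec hwa, hlam, a]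
    ext i
    simp only [Pi.add_apply, Pi.smul_apply, smul_eq_mul]
    field_simp
    push_cast
    ring
  · rw [polyNormF_sq, Fin.sum_univ_two]
    simp only [Matrix.cons_val_zero, Matrix.cons_val_one, frobNormSq_smul,
      frobNormSq_rankTwo hwa norm_one, frobNormSq_rankTwo hwa (by simp : ‖(-1 : ℂ)‖ = 1),
      vecNormSq_add_smul_star hwp, vecNormSq_smul, a]
    have hp := vecNormSq_nonneg p
    calc _ = 2 / ((1 + t) * s) * vecNormSq p + 1 / s * (‖β‖ ^ 2 * s) := by
          rw [norm_inv, norm_div, Complex.norm_real, Complex.norm_real, RCLike.norm_conj,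
            norm_zero, Real.norm_of_nonneg hts.le, Real.norm_of_nonneg hs.le, ← hs_def, ← ht_def]
          field_simp
          ring
      _ ≤ _ := by
          rw [mul_add]
          gcongr
          exacts [le_max_left _ _, le_max_right _ _]

/-- Reversal `zX + Y ↦ zY + X` maps T-even pencils to T-odd ones and `λ` to `λ⁻¹`. -/
theorem exists_mem_ToddPoly_polyEval_mulVec_eq {lam : ℂ} (hlam : lam ≠ 0) {w : n → ℂ}
    (hw : w ≠ 0) (u : n → ℂ) :
    ∃ D ∈ (ToddPoly : Set (Fin (1 + 1) → Matrix n n ℂ)), polyEval D lam *ᵥ w = u ∧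
      polyNormF D ^ 2 ≤ max (2 / ((1 + ‖lam‖ ^ 2) * vecNormSq w)) (1 / (‖lam‖ ^ 2 * vecNormSq w))
        * vecNormSq u := by
  obtain ⟨D, hD, hDw, hDn⟩ := exists_mem_TevenPoly_polyEval_mulVec_eq lam⁻¹ hw (lam⁻¹ • u)
  refine ⟨D ∘ Fin.rev, comp_rev_mem_ToddPoly hD, ?_, ?_⟩
  · rw [polyEval_pencil_comp_rev D hlam, smul_mulVec, hDw, smul_smul, mul_inv_cancel₀ hlam,
      one_smul]
  · have hs := vecNormSq_pos hw
    have ht : 0 < ‖lam‖ := norm_pos_iff.mpr hlam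
    rw [polyNormF_comp_rev]
    refine hDn.trans (le_of_eq ?_)
    rw [vecNormSq_smul, ← mul_assoc, max_mul_of_nonneg _ _ (by positivity), norm_inv]
    congr 2 <;> field_simp; ring

end StructuredPencil

section Linearization

variable {n m : ℕ} {A : Fin (m + 1) → Matrix (Fin n) (Fin n) ℂ} {lam : ℂ} {x : Fin n → ℂ}

theorem eta_linearization_bounds (hm : 1 ≤ m) (hx : vecNormSq x = 1)
    {B : Fin (1 + 1) → Matrix (Fin m × Fin n) (Fin m × Fin n) ℂ} {v : Fin m → ℂ}
    (hv : vecNormSq v = 1) (hL : InL1 A B v)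
    {S : Set (Fin (1 + 1) → Matrix (Fin m × Fin n) (Fin m × Fin n) ℂ)} {K : ℝ}
    (hK : K ≤ 2 / lamNormSq m lam)
    (hS : ∀ u, ∃ D ∈ S, polyEval D lam *ᵥ kronVec (lamVec m lam) x = u ∧
      polyNormF D ^ 2 ≤ K * vecNormSq u) :
    (√(((m : ℝ) + 1) / (2 * m)) * eta polyNormF Set.univ lam x A
        ≤ eta polyNormF S lam (kronVec (lamVec m lam) x) B ∧
      eta polyNormF S lam (kronVec (lamVec m lam) x) B
        ≤ √2 * eta polyNormF Set.univ lam x A) ∧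
    (√(((m : ℝ) + 1) / (2 * m)) * eta polyNorm2 Set.univ lam x A
        ≤ eta polyNorm2 S lam (kronVec (lamVec m lam) x) B ∧
      eta polyNorm2 S lam (kronVec (lamVec m lam) x) B
        ≤ √2 * eta polyNorm2 Set.univ lam x A) := by
  obtain ⟨hF, h2⟩ := eta_univ_eq A lam hx
  rw [hF, h2]
  set w := kronVec (lamVec m lam) x
  set r := vecNorm (polyEval A lam *ᵥ x)
  set k : ℝ := ((m : ℝ) + 1) / (2 * m)
  set Q := (1 + ‖lam‖ ^ 2) * vecNormSq (lamVec m lam)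
  have hr : vecNorm (polyEval B lam *ᵥ w) = r := by
    rw [vecNorm, hL, vecNormSq_kronVec, hv, one_mul]; rfl
  have hSpos := lamNormSq_pos m lam
  obtain ⟨D₀, hD₀, hD₀w, hD₀n⟩ := hS (-(polyEval B lam *ᵥ w))
  refine eta_bounds hD₀ (by rw [add_mulVec, hD₀w, add_neg_cancel]) ?_ fun D hD => ?_
  · rw [vecNormSq_neg, ← sq_vecNorm, hr] at hD₀n
    calc polyNormF D₀ = √(polyNormF D₀ ^ 2) := (Real.sqrt_sq (polyNormF_nonneg _)).symm
      _ ≤ √(2 / lamNormSq m lam * r ^ 2) :=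
          Real.sqrt_le_sqrt (hD₀n.trans (mul_le_mul_of_nonneg_right hK (sq_nonneg r)))
      _ = √2 * (r / √(lamNormSq m lam)) := by
          rw [Real.sqrt_mul (by positivity), Real.sqrt_sq (vecNorm_nonneg _),
            Real.sqrt_div' _ hSpos.le]
          ring
  · have hres : r ≤ √Q * polyNorm2 D := by
      have h := vecNorm_mulVec_le_of_add_mulVec_eq_zero hD
      rwa [hr, lamNormSq_one, vecNorm, vecNormSq_kronVec, hx, mul_one, mul_right_comm,
        ← Real.sqrt_mul (by positivity)] at h
    have hkQ : k * Q ≤ lamNormSq m lam := by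
      rw [div_mul_eq_mul_div, div_le_iff₀ (by positivity)]
      linarith [succ_mul_one_add_mul_vecNormSq_lamVec_le (m := m) lam]
    rw [← mul_div_assoc, div_le_iff₀ (Real.sqrt_pos.mpr hSpos)]
    calc √k * r ≤ √k * (√Q * polyNorm2 D) := mul_le_mul_of_nonneg_left hres (Real.sqrt_nonneg _)
      _ = √(k * Q) * polyNorm2 D := by
          rw [Real.sqrt_mul (by positivity : 0 ≤ k) Q]; ring
      _ ≤ polyNorm2 D * √(lamNormSq m lam) := by
          rw [mul_comm]
          exact mul_le_mul_of_nonneg_left (Real.sqrt_le_sqrt hkQ) (polyNorm2_nonneg D)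

end Linearization

theorem Teven_linearization_backward_error_general {n m : ℕ} (hm : 1 ≤ m)
    (A : Fin (m+1) → Matrix (Fin n) (Fin n) ℂ)
    (lam : ℂ) (x : Fin n → ℂ) (hx : star x ⬝ᵥ x = 1)
    (Be : Fin (1+1) → Matrix (Fin m × Fin n) (Fin m × Fin n) ℂ)
    (ve : Fin m → ℂ) (hve : vecNormSq ve = 1)
    (hLe : InL1 A Be ve)
    (Bo : Fin (1+1) → Matrix (Fin m × Fin n) (Fin m × Fin n) ℂ)
    (vo : Fin m → ℂ) (hvo : vecNormSq vo = 1)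
    (hLo : InL1 A Bo vo) :
    (‖lam‖ ≤ 1 →
      (Real.sqrt (((m : ℝ) + 1) / (2 * m)) * eta polyNormF Set.univ lam x A
          ≤ eta polyNormF TevenPoly lam (kronVec (lamVec m lam) x) Be ∧
        eta polyNormF TevenPoly lam (kronVec (lamVec m lam) x) Be
          ≤ Real.sqrt 2 * eta polyNormF Set.univ lam x A) ∧
      (Real.sqrt (((m : ℝ) + 1) / (2 * m)) * eta polyNorm2 Set.univ lam x A
          ≤ eta polyNorm2 TevenPoly lam (kronVec (lamVec m lam) x) Be ∧
        eta polyNorm2 TevenPoly lam (kronVec (lamVec m lam) x) Be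
          ≤ Real.sqrt 2 * eta polyNorm2 Set.univ lam x A)) ∧
    (1 ≤ ‖lam‖ →
      (Real.sqrt (((m : ℝ) + 1) / (2 * m)) * eta polyNormF Set.univ lam x A
          ≤ eta polyNormF ToddPoly lam (kronVec (lamVec m lam) x) Bo ∧
        eta polyNormF ToddPoly lam (kronVec (lamVec m lam) x) Bo
          ≤ Real.sqrt 2 * eta polyNormF Set.univ lam x A) ∧
      (Real.sqrt (((m : ℝ) + 1) / (2 * m)) * eta polyNorm2 Set.univ lam x A
          ≤ eta polyNorm2 ToddPoly lam (kronVec (lamVec m lam) x) Bo ∧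
        eta polyNorm2 ToddPoly lam (kronVec (lamVec m lam) x) Bo
          ≤ Real.sqrt 2 * eta polyNorm2 Set.univ lam x A)) := by
  have hx1 : vecNormSq x = 1 := by exact_mod_cast (star_dotProduct_self x).symm.trans hx
  have hw : vecNormSq (kronVec (lamVec m lam) x) = vecNormSq (lamVec m lam) := by
    rw [vecNormSq_kronVec, hx1, mul_one]
  have hw₀ : kronVec (lamVec m lam) x ≠ 0 := fun h => by
    have h₁ := one_le_vecNormSq_lamVec hm lam
    rw [← hw, h] at h₁; norm_num [vecNormSq] at h₁
  refine ⟨fun hl => eta_linearization_bounds hm hx1 hve hLe ?_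
      (exists_mem_TevenPoly_polyEval_mulVec_eq lam hw₀),
    fun hl => eta_linearization_bounds hm hx1 hvo hLo ?_
      (exists_mem_ToddPoly_polyEval_mulVec_eq (norm_pos_iff.mp (one_pos.trans_le hl)) hw₀)⟩
  · rw [hw]; exact max_div_le_two_div_lamNormSq_of_norm_le_one hm hl
  · rw [hw]; exact max_div_le_two_div_lamNormSq_of_one_le_norm hm hl

/-- Structured backward errors of a T-even matrix polynomial under a
T-even linearization (ansatz vector with `Σv = v`, optimal for `|λ| ≤ 1`) and under a
T-odd linearization (ansatz vector with `Σv = −v`, optimal for `|λ| ≥ 1`), for both the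
Frobenius and the spectral norm. -/
theorem Teven_linearization_backward_error {n m : ℕ} (hm : 1 ≤ m)
    (A : Fin (m+1) → Matrix (Fin n) (Fin n) ℂ)
    (hA : A ∈ TevenPoly) (hreg : Regular A) (hlead : A (Fin.last m) ≠ 0)
    (lam : ℂ) (x : Fin n → ℂ) (hx : star x ⬝ᵥ x = 1)
    (Be : Fin (1+1) → Matrix (Fin m × Fin n) (Fin m × Fin n) ℂ)
    (hBe : Be ∈ TevenPoly)
    (ve : Fin m → ℂ) (hve : vecNormSq ve = 1)
    (hveSigma : ∀ i : Fin m, ((-1 : ℂ)) ^ (m - 1 - (i : ℕ)) * ve i = ve i)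
    (hLe : InL1 A Be ve)
    (Bo : Fin (1+1) → Matrix (Fin m × Fin n) (Fin m × Fin n) ℂ)
    (hBo : Bo ∈ ToddPoly)
    (vo : Fin m → ℂ) (hvo : vecNormSq vo = 1)
    (hvoSigma : ∀ i : Fin m, ((-1 : ℂ)) ^ (m - 1 - (i : ℕ)) * vo i = -(vo i))
    (hLo : InL1 A Bo vo) :
    (‖lam‖ ≤ 1 →
      (Real.sqrt (((m : ℝ) + 1) / (2 * m)) * eta polyNormF Set.univ lam x A
          ≤ eta polyNormF TevenPoly lam (kronVec (lamVec m lam) x) Be ∧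
        eta polyNormF TevenPoly lam (kronVec (lamVec m lam) x) Be
          ≤ Real.sqrt 2 * eta polyNormF Set.univ lam x A) ∧
      (Real.sqrt (((m : ℝ) + 1) / (2 * m)) * eta polyNorm2 Set.univ lam x A
          ≤ eta polyNorm2 TevenPoly lam (kronVec (lamVec m lam) x) Be ∧
        eta polyNorm2 TevenPoly lam (kronVec (lamVec m lam) x) Be
          ≤ Real.sqrt 2 * eta polyNorm2 Set.univ lam x A)) ∧
    (1 ≤ ‖lam‖ →
      (Real.sqrt (((m : ℝ) + 1) / (2 * m)) * eta polyNormF Set.univ lam x A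
          ≤ eta polyNormF ToddPoly lam (kronVec (lamVec m lam) x) Bo ∧
        eta polyNormF ToddPoly lam (kronVec (lamVec m lam) x) Bo
          ≤ Real.sqrt 2 * eta polyNormF Set.univ lam x A) ∧
      (Real.sqrt (((m : ℝ) + 1) / (2 * m)) * eta polyNorm2 Set.univ lam x A
          ≤ eta polyNorm2 ToddPoly lam (kronVec (lamVec m lam) x) Bo ∧
        eta polyNorm2 ToddPoly lam (kronVec (lamVec m lam) x) Bo
          ≤ Real.sqrt 2 * eta polyNorm2 Set.univ lam x A)) :=
  Teven_linearization_backward_error_general hm A lam x hx Be ve hve hLe Bo vo hvo hLo
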